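/- arXiv:2408.01864 — 2 statements merged into one kernel-verified Lean document; each statement's English description precedes it below -/
import Mathlib

section
/- Let r ≥ 2 and c be integers with the same parity, 0 < c ≤ r-2, and write c = r - 2k. The set of negative integers x such that d_pc(O,(x,x+c)) = r equals ([0,r-k-1] ∩ ℤ) - c(k+1) - (k+1)k/2 if k is odd, and ([k-r,-1] ∩ ℤ) - ck - k(k-1)/2 if k is even. -/
def Lp : ℤ × ℤ → ℤ × ℤ := fun p => (-p.1 + 2*p.2 + 1, p.2)
def Lpp : ℤ × ℤ → ℤ × ℤ := fun p => (p.1, 2*p.1 - p.2 + 1)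
def Mr : ℤ × ℤ → ℤ × ℤ := fun p => (p.1 + 1, p.2)
def Ml : ℤ × ℤ → ℤ × ℤ := fun p => (p.1 - 1, p.2)
def Mu : ℤ × ℤ → ℤ × ℤ := fun p => (p.1, p.2 + 1)
def Md : ℤ × ℤ → ℤ × ℤ := fun p => (p.1, p.2 - 1)

def ops : Set ((ℤ × ℤ) → (ℤ × ℤ)) := {Lp, Lpp, Mr, Ml, Mu, Md}

/-- The parabolic-taxicab distance: minimal number of operators from `ops`
needed to map `P` to `Q`. -/
noncomputable def dpc (P Q : ℤ × ℤ) : ℕ :=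
  sInf {n | ∃ l : List ((ℤ × ℤ) → (ℤ × ℤ)), l.length = n ∧ (∀ f ∈ l, f ∈ ops) ∧
    l.foldr (fun f p => f p) P = Q}

/-! With `s = x - y` and `f = s² - (x + y)`, the reflections `L'`, `L''` move along the parabolas
`f = const`, and every operator flips the parity of `s`. Let `T(f)` be the least `t ≥ 0` with
`f ≤ t (t + 1)`. The potential `max (2 T(f) - |s|) |s|` vanishes at `O` and grows by at most one
per operator, so it bounds `d_pc(O, ·)` from below. On the line `y = x + c` with `x < 0` it equals
`2 T(c² - c - 2x) - c`, and this bound is attained by a taxicab walk followed by alternating `L'`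
and `L''`. Hence `d_pc(O, (x, x + c)) = c + 2k` exactly when `T(c² - c - 2x) = c + k`, which cuts
out a single interval of `x` whatever the parity of `k`. -/

lemma exists_le_mul_add_one (f : ℤ) : ∃ t : ℕ, f ≤ (t : ℤ) * (t + 1) :=
  ⟨f.toNat, by nlinarith [Int.self_le_toNat f, Int.natCast_nonneg f.toNat]⟩

def pronicIndex (f : ℤ) : ℤ := Nat.find (exists_le_mul_add_one f)

lemma pronicIndex_nonneg (f : ℤ) : 0 ≤ pronicIndex f := Int.natCast_nonneg _

lemma le_pronicIndex_mul (f : ℤ) : f ≤ pronicIndex f * (pronicIndex f + 1) :=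
  Nat.find_spec (exists_le_mul_add_one f)

lemma pronicIndex_le {f t : ℤ} (ht : 0 ≤ t) (h : f ≤ t * (t + 1)) : pronicIndex f ≤ t := by
  lift t to ℕ using ht
  exact Int.ofNat_le.mpr (Nat.find_min' (exists_le_mul_add_one f) h)

lemma lt_pronicIndex {f t : ℤ} (h : t * (t + 1) < f) : t < pronicIndex f := by
  by_contra! hle
  nlinarith [le_pronicIndex_mul f, pronicIndex_nonneg f]

lemma pronicIndex_mono {f g : ℤ} (h : f ≤ g) : pronicIndex f ≤ pronicIndex g :=
  pronicIndex_le (pronicIndex_nonneg g) (h.trans (le_pronicIndex_mul g))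

lemma pronicIndex_eq_iff {f t : ℤ} (ht : 1 ≤ t) :
    pronicIndex f = t ↔ (t - 1) * t < f ∧ f ≤ t * (t + 1) := by
  constructor
  · rintro rfl
    refine ⟨?_, le_pronicIndex_mul f⟩
    by_contra! h
    have := pronicIndex_le (t := pronicIndex f - 1) (by linarith) (by linarith)
    linarith
  · rintro ⟨h₁, h₂⟩
    exact le_antisymm (pronicIndex_le (by linarith) h₂)
      (by linarith [lt_pronicIndex (by linarith : (t - 1) * (t - 1 + 1) < f)])

def diag (p : ℤ × ℤ) : ℤ := p.1 - p.2

def parab (p : ℤ × ℤ) : ℤ := (p.1 - p.2) ^ 2 - (p.1 + p.2)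

def potential (p : ℤ × ℤ) : ℤ := max (2 * pronicIndex (parab p) - |diag p|) |diag p|

lemma potential_zero : potential (0, 0) = 0 := by
  have : pronicIndex 0 = 0 := le_antisymm (pronicIndex_le le_rfl (by norm_num)) (pronicIndex_nonneg 0)
  simp [potential, parab, diag, this]

lemma potential_le_add_one {p q : ℤ × ℤ}
    (h : (|diag q| = |diag p| + 1 ∧ parab q ≤ parab p + 2 * |diag q|) ∨
      (|diag q| = |diag p| - 1 ∧ parab q ≤ parab p)) :
    potential q ≤ potential p + 1 := by
  unfold potential
  set T := pronicIndex (parab p)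
  have hT := le_pronicIndex_mul (parab p)
  have hT0 := pronicIndex_nonneg (parab p)
  have h₁ := le_max_left (2 * T - |diag p|) |diag p|
  have h₂ := le_max_right (2 * T - |diag p|) |diag p|
  rcases h with ⟨hs, hf⟩ | ⟨hs, hf⟩
  · -- `parab q ≤ T (T + 1) + 2 (|diag p| + 1) ≤ (M + 1) (M + 2)` for `M = max T |diag p|`
    have hM : pronicIndex (parab q) ≤ max T |diag p| + 1 := by
      refine pronicIndex_le (by positivity) ?_
      nlinarith [le_max_left T |diag p|, le_max_right T |diag p|, abs_nonneg (diag p)]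
    refine max_le ?_ (by linarith)
    rcases le_total T |diag p| with h | h
    · rw [max_eq_right h] at hM; linarith
    · rw [max_eq_left h] at hM; linarith
  · have := pronicIndex_mono hf
    exact max_le (by linarith) (by linarith)

lemma potential_apply_le {g : ℤ × ℤ → ℤ × ℤ} (hg : g ∈ ops) (p : ℤ × ℤ) :
    potential (g p) ≤ potential p + 1 := by
  apply potential_le_add_one
  -- `Lp`, `Lpp` preserve `parab` and send `diag` to `1 - diag`, `-1 - diag`; the unit steps
  -- change `diag` by `±1` and `parab` by `2 diag`, `-2 diag` or `±2 diag + 2`.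
  simp only [ops, Set.mem_insert_iff, Set.mem_singleton_iff] at hg
  rcases lt_trichotomy (diag p) 0 with h | h | h <;>
    rcases abs_cases (diag p) with ⟨hs, _⟩ | ⟨hs, _⟩ <;>
    rcases abs_cases (diag (g p)) with ⟨hs', _⟩ | ⟨hs', _⟩ <;>
    rw [hs, hs'] <;>
    rcases hg with rfl | rfl | rfl | rfl | rfl | rfl <;>
    simp only [diag, parab, Lp, Lpp, Mr, Ml, Mu, Md] at * <;>
    first
    | exact Or.inl ⟨by linarith, by linarith⟩
    | exact Or.inr ⟨by linarith, by linarith⟩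

def IsOpsWord (l : List (ℤ × ℤ → ℤ × ℤ)) (P Q : ℤ × ℤ) : Prop :=
  (∀ f ∈ l, f ∈ ops) ∧ l.foldr (fun f p => f p) P = Q

lemma IsOpsWord.cons {l : List (ℤ × ℤ → ℤ × ℤ)} {P Q : ℤ × ℤ} (h : IsOpsWord l P Q)
    {g : ℤ × ℤ → ℤ × ℤ} (hg : g ∈ ops) : IsOpsWord (g :: l) P (g Q) :=
  ⟨by simpa [hg] using h.1, by rw [List.foldr_cons, h.2]⟩

lemma exists_isOpsWord (P Q : ℤ × ℤ) : ∃ l, IsOpsWord l P Q := by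
  have step : ∀ g ∈ ops, ∀ Q, (∃ l, IsOpsWord l P Q) → ∃ l, IsOpsWord l P (g Q) :=
    fun g hg _ ⟨l, hl⟩ => ⟨g :: l, hl.cons hg⟩
  have hmem : Mr ∈ ops ∧ Ml ∈ ops ∧ Mu ∈ ops ∧ Md ∈ ops := by simp [ops]
  obtain ⟨u, v, rfl⟩ : ∃ u v : ℤ, Q = (P.1 + u, P.2 + v) := ⟨Q.1 - P.1, Q.2 - P.2, by simp⟩
  induction v using Int.induction_on with
  | zero =>
    induction u using Int.induction_on with
    | zero => exact ⟨[], by simp [IsOpsWord]⟩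
    | succ i ih => simpa [Mr, add_assoc] using step Mr hmem.1 _ ih
    | pred i ih => simpa [Ml, sub_eq_add_neg, add_assoc] using step Ml hmem.2.1 _ ih
  | succ i ih => simpa [Mu, add_assoc] using step Mu hmem.2.2.1 _ ih
  | pred i ih => simpa [Md, sub_eq_add_neg, add_assoc] using step Md hmem.2.2.2 _ ih

lemma dpc_le_length {l : List (ℤ × ℤ → ℤ × ℤ)} {P Q : ℤ × ℤ} (h : IsOpsWord l P Q) :
    dpc P Q ≤ l.length :=
  Nat.sInf_le ⟨l, rfl, h⟩

lemma exists_isOpsWord_length_eq_dpc (P Q : ℤ × ℤ) :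
    ∃ l, IsOpsWord l P Q ∧ l.length = dpc P Q := by
  obtain ⟨l, hl⟩ := exists_isOpsWord P Q
  obtain ⟨l', hlen, hl'⟩ := Nat.sInf_mem (s := {n | ∃ l, l.length = n ∧ IsOpsWord l P Q})
    ⟨l.length, l, rfl, hl⟩
  exact ⟨l', hl', hlen⟩

lemma dpc_self (P : ℤ × ℤ) : dpc P P = 0 :=
  Nat.le_zero.mp (dpc_le_length (l := []) ⟨by simp, rfl⟩)

lemma dpc_apply_le {g : ℤ × ℤ → ℤ × ℤ} (hg : g ∈ ops) (P Q : ℤ × ℤ) :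
    dpc P (g Q) ≤ dpc P Q + 1 := by
  obtain ⟨l, hl, hlen⟩ := exists_isOpsWord_length_eq_dpc P Q
  simpa [hlen] using dpc_le_length (hl.cons hg)

lemma dpc_iterate_le {g : ℤ × ℤ → ℤ × ℤ} {P : ℤ × ℤ} {k : ℕ}
    (hg : ∀ Q, dpc P (g Q) ≤ dpc P Q + k) (n : ℕ) (Q : ℤ × ℤ) :
    dpc P (g^[n] Q) ≤ dpc P Q + n * k := by
  induction n with
  | zero => simp
  | succ n ih =>
    rw [Function.iterate_succ_apply']
    linarith [hg (g^[n] Q)]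

lemma sub_le_dpc (φ : ℤ × ℤ → ℤ) (hφ : ∀ g ∈ ops, ∀ p, φ (g p) ≤ φ p + 1) (P Q : ℤ × ℤ) :
    φ Q - φ P ≤ dpc P Q := by
  obtain ⟨l, ⟨hops, rfl⟩, hlen⟩ := exists_isOpsWord_length_eq_dpc P Q
  rw [← hlen]
  clear hlen
  induction l with
  | nil => simp
  | cons g l ih =>
    have := hφ g (hops g List.mem_cons_self) (l.foldr (fun f p => f p) P)
    have := ih fun f hf => hops f (List.mem_cons_of_mem _ hf)
    simp only [List.foldr_cons, List.length_cons]
    push_cast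
    linarith

lemma dpc_le_natAbs_add_natAbs (P : ℤ × ℤ) (u v : ℤ) :
    dpc P (P.1 + u, P.2 + v) ≤ u.natAbs + v.natAbs := by
  have hmem : Mr ∈ ops ∧ Ml ∈ ops ∧ Mu ∈ ops ∧ Md ∈ ops := by simp [ops]
  induction v using Int.induction_on with
  | zero =>
    induction u using Int.induction_on with
    | zero => simp [dpc_self]
    | succ i ih =>
      have := dpc_apply_le hmem.1 P (P.1 + i, P.2 + 0)
      simp only [Mr, add_assoc] at this
      omega
    | pred i ih =>
      have := dpc_apply_le hmem.2.1 P (P.1 + -i, P.2 + 0)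
      simp only [Ml, add_sub_assoc] at this
      omega
  | succ i ih =>
    have := dpc_apply_le hmem.2.2.1 P (P.1 + u, P.2 + i)
    simp only [Mu, add_assoc] at this
    omega
  | pred i ih =>
    have := dpc_apply_le hmem.2.2.2 P (P.1 + u, P.2 + -i)
    simp only [Md, add_sub_assoc] at this
    omega

lemma iterate_Lp_comp_Lpp (j : ℕ) (p : ℤ × ℤ) :
    (Lp ∘ Lpp)^[j] p = (2 * j ^ 2 + j + (2 * j + 1) * p.1 - 2 * j * p.2,
      2 * j ^ 2 - j + 2 * j * p.1 - (2 * j - 1) * p.2) := by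
  induction j with
  | zero => simp
  | succ j ih =>
    rw [Function.iterate_succ_apply', ih]
    simp only [Function.comp, Lp, Lpp]
    push_cast
    exact Prod.ext (by ring) (by ring)

lemma dpc_iterate_Lp_comp_Lpp_le (P Q : ℤ × ℤ) (j : ℕ) :
    dpc P ((Lp ∘ Lpp)^[j] Q) ≤ dpc P Q + j * 2 := by
  have hmem : Lp ∈ ops ∧ Lpp ∈ ops := by simp [ops]
  refine dpc_iterate_le (fun Q => ?_) j Q
  show dpc P (Lp (Lpp Q)) ≤ _
  linarith [dpc_apply_le hmem.1 P (Lpp Q), dpc_apply_le hmem.2 P Q]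

lemma dpc_line_le {x c m : ℤ} (hm : 0 ≤ m)
    (h₁ : 2 * m * c + m * (m - 1) < -(2 * x)) (h₂ : -(2 * x) ≤ 2 * (m + 1) * c + m * (m + 1)) :
    (dpc (0, 0) (x, x + c) : ℤ) ≤ c + 2 * m := by
  -- `(x, x + c)` is the image under `(Lp ∘ Lpp)^[j]` (preceded by `Lp` if `m` is odd) of a
  -- point at taxicab distance `c + m` from the origin.
  obtain ⟨j, rfl | rfl⟩ := Int.even_or_odd' m
  · lift j to ℕ using (by omega)
    set u := x + 2 * j * c + j * (2 * j - 1)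
    have hpt : (x, x + c) = (Lp ∘ Lpp)^[j] (u, u + c + 2 * j) := by
      rw [iterate_Lp_comp_Lpp]; exact Prod.ext (by ring) (by ring)
    have hu : u < 0 ∧ 0 ≤ u + c + 2 * j := by constructor <;> nlinarith
    have := dpc_iterate_Lp_comp_Lpp_le (0, 0) (u, u + c + 2 * j) j
    have := dpc_le_natAbs_add_natAbs (0, 0) u (u + c + 2 * j)
    rw [hpt]; simp only [zero_add] at *; omega
  · lift j to ℕ using (by omega)
    set u := x + (2 * j + 2) * c + (j + 1) * (2 * j + 1)
    have hpt : (x, x + c) = (Lp ∘ Lpp)^[j] (Lp (u, u - c - 2 * j - 1)) := by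
      rw [iterate_Lp_comp_Lpp]; simp only [Lp]; exact Prod.ext (by ring) (by ring)
    have hu : 0 ≤ u ∧ u - c - 2 * j - 1 ≤ 0 := by constructor <;> nlinarith
    have := dpc_iterate_Lp_comp_Lpp_le (0, 0) (Lp (u, u - c - 2 * j - 1)) j
    have := dpc_apply_le (show Lp ∈ ops by simp [ops]) (0, 0) (u, u - c - 2 * j - 1)
    have := dpc_le_natAbs_add_natAbs (0, 0) u (u - c - 2 * j - 1)
    rw [hpt]; simp only [zero_add] at *; omega

lemma dpc_line {x c : ℤ} (hx : x < 0) (hc : 0 ≤ c) :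
    (dpc (0, 0) (x, x + c) : ℤ) = 2 * pronicIndex (c ^ 2 - c - 2 * x) - c := by
  have hf : 0 < c ^ 2 - c - 2 * x := by nlinarith
  set f := c ^ 2 - c - 2 * x
  apply le_antisymm
  · have hcT : c - 1 < pronicIndex f := lt_pronicIndex (by nlinarith)
    have hT : 0 < pronicIndex f := lt_pronicIndex (by linarith)
    obtain ⟨h₁, h₂⟩ := (pronicIndex_eq_iff hT).mp rfl
    have := dpc_line_le (x := x) (c := c) (m := pronicIndex f - c) (by omega) (by nlinarith)
      (by nlinarith)
    linarith
  · have hpot : potential (x, x + c) = max (2 * pronicIndex f - c) c := by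
      have hparab : parab (x, x + c) = f := by simp only [parab, f]; ring
      have hdiag : |diag (x, x + c)| = c := by simp [diag, abs_of_nonneg hc]
      rw [potential, hparab, hdiag]
    calc 2 * pronicIndex f - c
        ≤ potential (x, x + c) - potential (0, 0) := by
          rw [hpot, potential_zero]; simp
      _ ≤ dpc (0, 0) (x, x + c) := sub_le_dpc potential (fun _ hg => potential_apply_le hg) _ _

lemma setOf_dpc_line_eq_Icc {c k : ℤ} (hc : 0 ≤ c) (hk : 1 ≤ k) :
    {x : ℤ | x < 0 ∧ (dpc (0, 0) (x, x + c) : ℤ) = c + 2 * k} =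
      Set.Icc (-(c * (k + 1)) - (k + 1) * k / 2) (-(c * k) - k * (k - 1) / 2 - 1) := by
  obtain ⟨q, hkq⟩ : ∃ q, k * (k - 1) = 2 * q := by
    obtain ⟨q, hq⟩ := Int.even_mul_pred_self k
    exact ⟨q, by linarith⟩
  have hdiv₁ : (k + 1) * k / 2 = q + k := by
    rw [show (k + 1) * k = 2 * (q + k) by linarith, Int.mul_ediv_cancel_left _ two_ne_zero]
  have hdiv₂ : k * (k - 1) / 2 = q := by rw [hkq, Int.mul_ediv_cancel_left _ two_ne_zero]
  ext x
  simp only [Set.mem_ofPred_eq, Set.mem_Icc, hdiv₁, hdiv₂]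
  constructor
  · rintro ⟨hx, hd⟩
    rw [dpc_line hx hc] at hd
    have := (pronicIndex_eq_iff (f := c ^ 2 - c - 2 * x) (t := c + k) (by omega)).mp (by omega)
    constructor <;> nlinarith
  · rintro ⟨h₁, h₂⟩
    have hx : x < 0 := by nlinarith
    refine ⟨hx, ?_⟩
    rw [dpc_line hx hc, (pronicIndex_eq_iff (by omega : 1 ≤ c + k)).mpr ⟨by nlinarith, by nlinarith⟩]
    ring

theorem neg_part_of_boundary_lines_pos_c_general (r c k : ℤ) (hc0 : 0 < c) (hcl : c ≤ r - 2)
    (hk : c = r - 2 * k) :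
    (Odd k →
      {x : ℤ | x < 0 ∧ (dpc (0, 0) (x, x + c) : ℤ) = r} =
        (fun x => x + (-(c * (k + 1)) - (k + 1) * k / 2)) '' Set.Icc 0 (r - k - 1)) ∧
    (Even k →
      {x : ℤ | x < 0 ∧ (dpc (0, 0) (x, x + c) : ℤ) = r} =
        (fun x => x + (-(c * k) - k * (k - 1) / 2)) '' Set.Icc (k - r) (-1)) := by
  obtain rfl : r = c + 2 * k := by omega
  have hk1 : 1 ≤ k := by omega
  have hdiv : (k + 1) * k / 2 = k * (k - 1) / 2 + k := by
    rw [show (k + 1) * k = k * (k - 1) + k * 2 by ring, Int.add_mul_ediv_right _ _ two_ne_zero]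
  refine ⟨fun _ => ?_, fun _ => ?_⟩ <;>
    rw [setOf_dpc_line_eq_Icc hc0.le hk1, Set.image_add_const_Icc] <;>
    congr 1 <;> linarith

theorem neg_part_of_boundary_lines_pos_c (r c k : ℤ) (hr : 2 ≤ r)
    (hpar : c % 2 = r % 2) (hc0 : 0 < c) (hcl : c ≤ r - 2) (hk : c = r - 2 * k) :
    (Odd k →
      {x : ℤ | x < 0 ∧ (dpc (0, 0) (x, x + c) : ℤ) = r} =
        (fun x => x + (-(c * (k + 1)) - (k + 1) * k / 2)) '' Set.Icc 0 (r - k - 1)) ∧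
    (Even k →
      {x : ℤ | x < 0 ∧ (dpc (0, 0) (x, x + c) : ℤ) = r} =
        (fun x => x + (-(c * k) - k * (k - 1) / 2)) '' Set.Icc (k - r) (-1)) :=
  neg_part_of_boundary_lines_pos_c_general r c k hc0 hcl hk
end

section
/- For every integer r ≥ 0, the number of points X ∈ ℤ² with d_pc(O,X) ≤ r equals (10r³ + 9r² + 23r)/12 + ⌈r/2⌉/2 + 1. -/
/-!
In the coordinates `h = x - y`, `G = tri h - x` (where `tri h = h (h + 1) / 2`) the operators
act as `(h, G) ↦ (±1 - h, G)`, `(h ± 1, G ± h)`, `(h ± 1, G ± h + 1)`, and the ball of radius `r`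
becomes `{(h, G) | |h| ≤ r, tri |h| - tri m ≤ G ≤ tri m}` with `m = ⌊(r + |h|) / 2⌋`. This is
proved by induction on `r`: these sets are mapped into each other by the operators, and every point
of radius `r + 1` is the image of a point of radius `r` (for `h ≥ 0` by hand, for `h < 0` by the
symmetry `(x, y) ↦ (y, x)`, which is `h ↦ -h`). Counting row by row, going from `r` to `r + 2`
adds `2 (m + 1)` to every old row plus four new rows, which gives the cubic formula.
-/

theorem ncard_setOf_fst_mem_snd_mem_Icc {ι : Type*} (s : Finset ι) (lo hi : ι → ℤ)
    (hle : ∀ i ∈ s, lo i ≤ hi i + 1) :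
    ({p : ι × ℤ | p.1 ∈ s ∧ lo p.1 ≤ p.2 ∧ p.2 ≤ hi p.1}.ncard : ℤ) =
      ∑ i ∈ s, (hi i + 1 - lo i) := by
  have : {p : ι × ℤ | p.1 ∈ s ∧ lo p.1 ≤ p.2 ∧ p.2 ≤ hi p.1} =
      ↑((s.sigma fun i => Finset.Icc (lo i) (hi i)).map
        (Equiv.sigmaEquivProd ι ℤ).toEmbedding) := by
    ext ⟨i, G⟩
    simp
  rw [this, Set.ncard_coe_finset, Finset.card_map, Finset.card_sigma, Nat.cast_sum]
  exact Finset.sum_congr rfl fun i hs => Int.card_Icc_of_le _ _ (hle i hs)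

theorem Finset.sum_Icc_neg_add_two {M : Type*} [AddCommMonoid M] (f : ℤ → M)
    (hf : ∀ h, f (-h) = f h) {n : ℤ} (hn : 0 ≤ n) :
    ∑ h ∈ Icc (-(n + 2)) (n + 2), f h = ∑ h ∈ Icc (-n) n, f h + 2 • (f (n + 1) + f (n + 2)) := by
  have : Icc (-(n + 2)) (n + 2) =
      insert (n + 2) (insert (-(n + 2)) (insert (n + 1) (insert (-(n + 1)) (Icc (-n) n)))) := by
    ext; simp only [mem_Icc, mem_insert]; omega
  rw [this, sum_insert, sum_insert, sum_insert, sum_insert, hf, hf, two_nsmul]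
  · abel
  all_goals simp only [mem_Icc, mem_insert]; omega

section WordMetric

variable {α : Type*}

def ReachableIn (S : Set (α → α)) (P : α) (n : ℕ) (Q : α) : Prop :=
  ∃ l : List (α → α), l.length = n ∧ (∀ f ∈ l, f ∈ S) ∧ l.foldr (fun f p => f p) P = Q

variable {S : Set (α → α)} {P Q : α} {n : ℕ}

lemma reachableIn_zero_iff : ReachableIn S P 0 Q ↔ Q = P := by
  constructor
  · rintro ⟨l, hl, -, rfl⟩
    rw [List.length_eq_zero_iff.mp hl, List.foldr_nil]
  · rintro rfl
    exact ⟨[], rfl, by simp, rfl⟩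

lemma reachableIn_succ_iff :
    ReachableIn S P (n + 1) Q ↔ ∃ f ∈ S, ∃ Y, ReachableIn S P n Y ∧ f Y = Q := by
  constructor
  · rintro ⟨_ | ⟨f, l⟩, hl, hS, rfl⟩
    · simp at hl
    · exact ⟨f, hS f (List.mem_cons_self ..), _,
        ⟨l, Nat.succ.inj hl, fun g hg => hS g (List.mem_cons_of_mem _ hg), rfl⟩, rfl⟩
  · rintro ⟨f, hf, Y, ⟨l, rfl, hS, rfl⟩, rfl⟩
    exact ⟨f :: l, rfl, List.forall_mem_cons.mpr ⟨hf, hS⟩, rfl⟩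

theorem eq_setOf_exists_reachableIn {C : ℕ → Set α} (h0 : C 0 = {P})
    (hsucc : ∀ r, C (r + 1) = C r ∪ ⋃ f ∈ S, f '' C r) (r : ℕ) :
    C r = {Q | ∃ n ≤ r, ReachableIn S P n Q} := by
  induction r with
  | zero => ext Q; simp [h0, reachableIn_zero_iff]
  | succ r ih =>
    ext Q
    simp only [hsucc, ih, Set.mem_union, Set.mem_iUnion, Set.mem_image, Set.mem_ofPred_eq,
      exists_prop]
    constructor
    · rintro (⟨n, hn, hQ⟩ | ⟨f, hf, Y, ⟨n, hn, hY⟩, rfl⟩)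
      · exact ⟨n, by omega, hQ⟩
      · exact ⟨n + 1, by omega, reachableIn_succ_iff.mpr ⟨f, hf, Y, hY, rfl⟩⟩
    · rintro ⟨_ | n, hn, hQ⟩
      · exact Or.inl ⟨0, by omega, hQ⟩
      · obtain ⟨f, hf, Y, hY, rfl⟩ := reachableIn_succ_iff.mp hQ
        rcases Nat.lt_or_ge n r with h | h
        · exact Or.inl ⟨n + 1, h, reachableIn_succ_iff.mpr ⟨f, hf, Y, hY, rfl⟩⟩
        · exact Or.inr ⟨f, hf, Y, ⟨n, by omega, hY⟩, rfl⟩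

end WordMetric

lemma dpc_le_iff {P Q : ℤ × ℤ} {r : ℕ} (hQ : ∃ n, ReachableIn ops P n Q) :
    dpc P Q ≤ r ↔ ∃ n ≤ r, ReachableIn ops P n Q := by
  constructor
  · intro h
    exact ⟨_, h, Nat.sInf_mem hQ⟩
  · rintro ⟨n, hn, hQn⟩
    exact (Nat.sInf_le hQn).trans hn

namespace ParabolicTaxicab

def tri (n : ℤ) : ℤ := n * (n + 1) / 2

lemma two_mul_tri (n : ℤ) : 2 * tri n = n * (n + 1) := by
  obtain ⟨c, hc⟩ := Int.even_mul_succ_self n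
  unfold tri
  omega

@[simp] lemma tri_zero : tri 0 = 0 := rfl

lemma tri_add_one (n : ℤ) : tri (n + 1) = tri n + n + 1 := by
  have := two_mul_tri n
  have := two_mul_tri (n + 1)
  linarith

lemma tri_neg (n : ℤ) : tri (-n) = tri n - n := by
  have := two_mul_tri n
  have := two_mul_tri (-n)
  linarith

lemma tri_sub_one (n : ℤ) : tri (n - 1) = tri n - n := by
  have := tri_add_one (n - 1)
  rw [sub_add_cancel] at this
  linarith

lemma tri_one_sub (n : ℤ) : tri (1 - n) = tri n - 2 * n + 1 := by
  rw [show 1 - n = -(n - 1) by ring, tri_neg, tri_sub_one]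
  ring

lemma tri_neg_one_sub (n : ℤ) : tri (-1 - n) = tri n := by
  rw [show -1 - n = -(n + 1) by ring, tri_neg, tri_add_one]
  ring

lemma tri_le_tri {a b : ℤ} (ha : 0 ≤ a) (hab : a ≤ b) : tri a ≤ tri b := by
  have := two_mul_tri a
  have := two_mul_tri b
  nlinarith

lemma self_le_tri {n : ℤ} (hn : 0 ≤ n) : n ≤ tri n := by
  rcases hn.eq_or_lt with rfl | hn
  · rfl
  · have := two_mul_tri n
    nlinarith

def coords : ℤ × ℤ ≃ ℤ × ℤ where
  toFun p := (p.1 - p.2, tri (p.1 - p.2) - p.1)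
  invFun q := (tri q.1 - q.2, tri q.1 - q.2 - q.1)
  left_inv p := by ext <;> simp
  right_inv q := by ext <;> simp

section coords
variable (p : ℤ × ℤ)

@[simp] lemma coords_apply : coords p = (p.1 - p.2, tri (p.1 - p.2) - p.1) := rfl

lemma coords_Lp : coords (Lp p) = (1 - (coords p).1, (coords p).2) := by
  simp only [coords_apply, Lp, Prod.mk.injEq]
  rw [show -p.1 + 2 * p.2 + 1 - p.2 = 1 - (p.1 - p.2) by ring, tri_one_sub]
  constructor <;> ring

lemma coords_Lpp : coords (Lpp p) = (-1 - (coords p).1, (coords p).2) := by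
  simp only [coords_apply, Lpp, Prod.mk.injEq]
  rw [show p.1 - (2 * p.1 - p.2 + 1) = -1 - (p.1 - p.2) by ring, tri_neg_one_sub]
  constructor <;> ring

lemma coords_Mr : coords (Mr p) = ((coords p).1 + 1, (coords p).2 + (coords p).1) := by
  simp only [coords_apply, Mr, Prod.mk.injEq]
  rw [show p.1 + 1 - p.2 = p.1 - p.2 + 1 by ring, tri_add_one]
  constructor <;> ring

lemma coords_Ml : coords (Ml p) = ((coords p).1 - 1, (coords p).2 - (coords p).1 + 1) := by
  simp only [coords_apply, Ml, Prod.mk.injEq]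
  rw [show p.1 - 1 - p.2 = p.1 - p.2 - 1 by ring, tri_sub_one]
  constructor <;> ring

lemma coords_Mu : coords (Mu p) = ((coords p).1 - 1, (coords p).2 - (coords p).1) := by
  simp only [coords_apply, Mu, Prod.mk.injEq]
  rw [show p.1 - (p.2 + 1) = p.1 - p.2 - 1 by ring, tri_sub_one]
  constructor <;> ring

lemma coords_Md : coords (Md p) = ((coords p).1 + 1, (coords p).2 + (coords p).1 + 1) := by
  simp only [coords_apply, Md, Prod.mk.injEq]
  rw [show p.1 - (p.2 - 1) = p.1 - p.2 + 1 by ring, tri_add_one]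
  constructor <;> ring

lemma coords_swap : coords p.swap = (-(coords p).1, (coords p).2) := by
  simp only [coords_apply, Prod.fst_swap, Prod.snd_swap, Prod.mk.injEq]
  rw [show p.2 - p.1 = -(p.1 - p.2) by ring, tri_neg]
  constructor <;> ring

end coords

/-- The image of the ball of radius `r` under `coords`. -/
def InBall (r h G : ℤ) : Prop :=
  |h| ≤ r ∧ tri |h| - tri ((r + |h|) / 2) ≤ G ∧ G ≤ tri ((r + |h|) / 2)

variable {r h G : ℤ}

@[simp] lemma inBall_neg_iff : InBall r (-h) G ↔ InBall r h G := by
  simp only [InBall, abs_neg]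

lemma inBall_zero_iff : InBall 0 h G ↔ h = 0 ∧ G = 0 := by
  constructor
  · rintro ⟨hr, hlo, hhi⟩
    obtain rfl : h = 0 := abs_nonpos_iff.mp hr
    simp only [abs_zero, add_zero, EuclideanDomain.zero_div, tri_zero, sub_zero] at hlo hhi
    exact ⟨rfl, le_antisymm hhi hlo⟩
  · rintro ⟨rfl, rfl⟩
    simp [InBall]

lemma inBall_iff_of_nonneg (hh : 0 ≤ h) :
    InBall r h G ↔ h ≤ r ∧ tri h - tri ((r + h) / 2) ≤ G ∧ G ≤ tri ((r + h) / 2) := by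
  rw [InBall, abs_of_nonneg hh]

namespace InBall

lemma succ (H : InBall r h G) : InBall (r + 1) h G := by
  obtain ⟨hr, hlo, hhi⟩ := H
  have := abs_nonneg h
  have := tri_le_tri (b := (r + 1 + |h|) / 2) (by omega) (by omega : (r + |h|) / 2 ≤ _)
  exact ⟨by omega, by omega, by omega⟩

lemma succ_of_abs_eq_add_one {h' G' : ℤ} (H : InBall r h G) (habs : |h'| = |h| + 1)
    (hG : G ≤ G') (hG' : G' ≤ G + |h| + 1) : InBall (r + 1) h' G' := by
  obtain ⟨hr, hlo, hhi⟩ := H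
  have hm : (r + 1 + |h'|) / 2 = (r + |h|) / 2 + 1 := by omega
  refine ⟨by omega, ?_, ?_⟩ <;> rw [hm, tri_add_one]
  · rw [habs, tri_add_one]; omega
  · omega

lemma succ_of_abs_eq_sub_one {h' G' : ℤ} (H : InBall r h G) (habs : |h'| = |h| - 1)
    (hG : G - |h| ≤ G') (hG' : G' ≤ G) : InBall (r + 1) h' G' := by
  obtain ⟨hr, hlo, hhi⟩ := H
  have := abs_nonneg h'
  have hm : (r + 1 + |h'|) / 2 = (r + |h|) / 2 := by omega
  have : tri |h| = tri |h'| + |h'| + 1 := by rw [← tri_add_one, habs, sub_add_cancel]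
  rw [InBall, hm]
  exact ⟨by omega, by omega, by omega⟩

lemma step_Lp (H : InBall r h G) : InBall (r + 1) (1 - h) G := by
  rcases le_or_gt 1 h with hh | hh
  · have h₁ : |h| = h := abs_of_pos (by omega)
    have h₂ : |1 - h| = h - 1 := by rw [abs_of_nonpos (by omega : 1 - h ≤ 0)]; ring
    exact H.succ_of_abs_eq_sub_one (by omega) (by omega) le_rfl
  · have h₁ : |h| = -h := abs_of_nonpos (by omega)
    have h₂ : |1 - h| = 1 - h := abs_of_pos (by omega)
    exact H.succ_of_abs_eq_add_one (by omega) le_rfl (by omega)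

lemma step_Mr (H : InBall r h G) : InBall (r + 1) (h + 1) (G + h) := by
  rcases le_or_gt 0 h with hh | hh
  · have h₁ : |h| = h := abs_of_nonneg hh
    have h₂ : |h + 1| = h + 1 := abs_of_nonneg (by omega)
    exact H.succ_of_abs_eq_add_one (by omega) (by omega) (by omega)
  · have h₁ : |h| = -h := abs_of_neg hh
    have h₂ : |h + 1| = -(h + 1) := abs_of_nonpos (by omega)
    exact H.succ_of_abs_eq_sub_one (by omega) (by omega) (by omega)

lemma step_Md (H : InBall r h G) : InBall (r + 1) (h + 1) (G + h + 1) := by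
  rcases le_or_gt 0 h with hh | hh
  · have h₁ : |h| = h := abs_of_nonneg hh
    have h₂ : |h + 1| = h + 1 := abs_of_nonneg (by omega)
    exact H.succ_of_abs_eq_add_one (by omega) (by omega) (by omega)
  · have h₁ : |h| = -h := abs_of_neg hh
    have h₂ : |h + 1| = -(h + 1) := abs_of_nonpos (by omega)
    exact H.succ_of_abs_eq_sub_one (by omega) (by omega) (by omega)

lemma step_Lpp (H : InBall r h G) : InBall (r + 1) (-1 - h) G := by
  convert inBall_neg_iff.mpr (inBall_neg_iff.mpr H).step_Lp using 1
  ring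

lemma step_Mu (H : InBall r h G) : InBall (r + 1) (h - 1) (G - h) := by
  convert inBall_neg_iff.mpr (inBall_neg_iff.mpr H).step_Mr using 1 <;> ring

lemma step_Ml (H : InBall r h G) : InBall (r + 1) (h - 1) (G - h + 1) := by
  convert inBall_neg_iff.mpr (inBall_neg_iff.mpr H).step_Md using 1 <;> ring

end InBall

lemma exists_inBall (h G : ℤ) : ∃ r : ℕ, InBall r h G := by
  have ha := abs_nonneg h
  have hta := self_le_tri ha
  have := le_abs_self G
  have := neg_abs_le G
  refine ⟨(2 * (|G| + tri |h|)).toNat, ?_⟩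
  rw [Int.toNat_of_nonneg (by omega)]
  have := self_le_tri (n := (2 * (|G| + tri |h|) + |h|) / 2) (by omega)
  exact ⟨by omega, by omega, by omega⟩

lemma inBall_or_of_inBall_succ_self (hr : 0 ≤ r) (H : InBall (r + 1) (r + 1) G) :
    InBall r (-r) G ∨ InBall r r (G - (r + 1)) := by
  rw [inBall_iff_of_nonneg (by omega), show (r + 1 + (r + 1)) / 2 = r + 1 by omega, sub_self,
    tri_add_one] at H
  rw [inBall_neg_iff, inBall_iff_of_nonneg hr, inBall_iff_of_nonneg hr,
    show (r + r) / 2 = r by omega]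
  have := self_le_tri hr
  omega

/-- A point of radius `r + 1` but not `r` lies on the edge `h = r + 1`, or at the top or bottom
of a row with `r + h` odd. -/
lemma inBall_or_of_inBall_succ (hr : 0 ≤ r) (hh : 0 ≤ h) (H : InBall (r + 1) h G) :
    InBall r h G ∨ InBall r (1 - h) G ∨ InBall r (-1 - h) G ∨
      InBall r (h + 1) (G + h + 1) ∨ InBall r (h - 1) (G - h) := by
  rcases H.1.eq_or_lt with hedge | hlt
  · rw [abs_of_nonneg hh] at hedge
    subst hedge
    rcases inBall_or_of_inBall_succ_self hr H with H' | H'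
    · exact Or.inr (Or.inl (by rwa [show 1 - (r + 1) = -r by ring]))
    · exact Or.inr (Or.inr (Or.inr (Or.inr (by rwa [add_sub_cancel_right]))))
  rw [inBall_iff_of_nonneg hh] at H ⊢
  obtain ⟨-, hlo, hhi⟩ := H
  rw [abs_of_nonneg hh] at hlt
  set m := (r + h) / 2 with hm
  rcases Int.emod_two_eq (r + h) with hpar | hpar
  · rw [show (r + 1 + h) / 2 = m by omega] at hlo hhi
    exact Or.inl ⟨by omega, hlo, hhi⟩
  rw [show (r + 1 + h) / 2 = m + 1 by omega, tri_add_one] at hlo hhi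
  have hmono := tri_le_tri hh (by omega : h ≤ m)
  have := self_le_tri (by omega : 0 ≤ m)
  by_cases htop : tri m < G
  · right; right; left
    rw [show -1 - h = -(h + 1) by ring, inBall_neg_iff, inBall_iff_of_nonneg (by omega),
      show (r + (h + 1)) / 2 = m + 1 by omega, tri_add_one, tri_add_one]
    omega
  by_cases hbot : G < tri h - tri m
  · right; right; right; left
    rw [inBall_iff_of_nonneg (by omega), show (r + (h + 1)) / 2 = m + 1 by omega, tri_add_one,
      tri_add_one]
    omega
  · exact Or.inl ⟨by omega, by omega, by omega⟩

def pcBall (r : ℕ) : Set (ℤ × ℤ) := coords ⁻¹' {q | InBall r q.1 q.2}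

variable {r : ℕ} {p : ℤ × ℤ}

lemma mem_pcBall : p ∈ pcBall r ↔ InBall r (coords p).1 (coords p).2 := Iff.rfl

lemma pcBall_zero : pcBall 0 = {(0, 0)} := by
  ext p
  rw [mem_pcBall, Nat.cast_zero, inBall_zero_iff, Set.mem_singleton_iff,
    ← coords.injective.eq_iff, Prod.ext_iff]
  rfl

lemma swap_mem_pcBall_iff : p.swap ∈ pcBall r ↔ p ∈ pcBall r := by
  rw [mem_pcBall, mem_pcBall, coords_swap, inBall_neg_iff]

lemma pcBall_subset_succ : pcBall r ⊆ pcBall (r + 1) := fun _ hp => by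
  rw [mem_pcBall, Nat.cast_succ]
  exact hp.succ

lemma map_mem_pcBall_succ {f : ℤ × ℤ → ℤ × ℤ} (hf : f ∈ ops) (hp : p ∈ pcBall r) :
    f p ∈ pcBall (r + 1) := by
  rw [mem_pcBall] at hp
  rw [mem_pcBall, Nat.cast_succ]
  rcases hf with rfl | rfl | rfl | rfl | rfl | rfl
  · rw [coords_Lp]; exact hp.step_Lp
  · rw [coords_Lpp]; exact hp.step_Lpp
  · rw [coords_Mr]; exact hp.step_Mr
  · rw [coords_Ml]; exact hp.step_Ml
  · rw [coords_Mu]; exact hp.step_Mu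
  · rw [coords_Md]; exact hp.step_Md

lemma swap_comp_comp_swap_mem_ops {f : ℤ × ℤ → ℤ × ℤ} (hf : f ∈ ops) :
    Prod.swap ∘ f ∘ Prod.swap ∈ ops := by
  rcases hf with rfl | rfl | rfl | rfl | rfl | rfl
  · rw [show Prod.swap ∘ Lp ∘ Prod.swap = Lpp by funext p; simp [Lp, Lpp]; ring]; simp [ops]
  · rw [show Prod.swap ∘ Lpp ∘ Prod.swap = Lp by funext p; simp [Lp, Lpp]; ring]; simp [ops]
  · rw [show Prod.swap ∘ Mr ∘ Prod.swap = Mu by funext p; simp [Mr, Mu]]; simp [ops]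
  · rw [show Prod.swap ∘ Ml ∘ Prod.swap = Md by funext p; simp [Ml, Md]]; simp [ops]
  · rw [show Prod.swap ∘ Mu ∘ Prod.swap = Mr by funext p; simp [Mu, Mr]]; simp [ops]
  · rw [show Prod.swap ∘ Md ∘ Prod.swap = Ml by funext p; simp [Md, Ml]]; simp [ops]

lemma mem_pcBall_or_exists_of_mem_succ (hX : p ∈ pcBall (r + 1)) :
    p ∈ pcBall r ∨ ∃ f ∈ ops, ∃ Y ∈ pcBall r, f Y = p := by
  wlog hh : 0 ≤ (coords p).1 generalizing p
  · rcases this (swap_mem_pcBall_iff.mpr hX) (by rw [coords_swap]; omega) with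
      h | ⟨f, hf, Y, hY, hfY⟩
    · exact Or.inl (swap_mem_pcBall_iff.mp h)
    · refine Or.inr ⟨_, swap_comp_comp_swap_mem_ops hf, Y.swap, swap_mem_pcBall_iff.mpr hY, ?_⟩
      simp [hfY]
  rw [mem_pcBall, Nat.cast_succ] at hX
  simp only [mem_pcBall]
  rcases inBall_or_of_inBall_succ (Nat.cast_nonneg r) hh hX with h | h | h | h | h
  · exact Or.inl h
  · refine Or.inr ⟨Lp, by simp [ops], Lp p, by rwa [coords_Lp], ?_⟩
    simp only [Lp]; ring_nf
  · refine Or.inr ⟨Lpp, by simp [ops], Lpp p, by rwa [coords_Lpp], ?_⟩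
    simp only [Lpp]; ring_nf
  · exact Or.inr ⟨Mu, by simp [ops], Md p, by rwa [coords_Md], by simp [Mu, Md]⟩
  · exact Or.inr ⟨Md, by simp [ops], Mu p, by rwa [coords_Mu], by simp [Mu, Md]⟩

lemma pcBall_succ (r : ℕ) : pcBall (r + 1) = pcBall r ∪ ⋃ f ∈ ops, f '' pcBall r := by
  ext p
  simp only [Set.mem_union, Set.mem_iUnion, Set.mem_image, exists_prop]
  constructor
  · exact mem_pcBall_or_exists_of_mem_succ
  · rintro (h | ⟨f, hf, Y, hY, rfl⟩)
    · exact pcBall_subset_succ h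
    · exact map_mem_pcBall_succ hf hY

lemma exists_mem_pcBall (p : ℤ × ℤ) : ∃ r, p ∈ pcBall r :=
  exists_inBall _ _

theorem setOf_dpc_le_eq_pcBall (r : ℕ) : {X | dpc (0, 0) X ≤ r} = pcBall r := by
  have hC := eq_setOf_exists_reachableIn pcBall_zero pcBall_succ
  ext X
  have hreach : ∃ n, ReachableIn ops (0, 0) n X := by
    obtain ⟨r₀, h₀⟩ := exists_mem_pcBall X
    rw [hC] at h₀
    obtain ⟨n, -, hn⟩ := h₀
    exact ⟨n, hn⟩
  rw [Set.mem_ofPred_eq, dpc_le_iff hreach, hC]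
  rfl

def rowLength (r h : ℤ) : ℤ := 2 * tri ((r + |h|) / 2) - tri |h| + 1

noncomputable def ballSize (r : ℕ) : ℤ := ∑ h ∈ Finset.Icc (-(r : ℤ)) r, rowLength r h

lemma ncard_pcBall (r : ℕ) : ((pcBall r).ncard : ℤ) = ballSize r := by
  rw [pcBall, Set.ncard_preimage_of_injective_subset_range coords.injective (by simp)]
  have : {q : ℤ × ℤ | InBall r q.1 q.2} = {q | q.1 ∈ Finset.Icc (-(r : ℤ)) r ∧
      tri |q.1| - tri ((r + |q.1|) / 2) ≤ q.2 ∧ q.2 ≤ tri ((r + |q.1|) / 2)} := by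
    ext q
    rw [Set.mem_ofPred_eq, Set.mem_ofPred_eq, Finset.mem_Icc, ← abs_le, InBall]
  rw [this, ncard_setOf_fst_mem_snd_mem_Icc _ (fun h => tri |h| - tri ((r + |h|) / 2))
    (fun h => tri ((r + |h|) / 2))]
  · exact Finset.sum_congr rfl fun h _ => by rw [rowLength]; ring
  · intro h hh
    rw [Finset.mem_Icc, ← abs_le] at hh
    have := abs_nonneg h
    have := tri_le_tri (abs_nonneg h) (by omega : |h| ≤ (r + |h|) / 2)
    have := self_le_tri (by omega : 0 ≤ (r + |h|) / 2)
    omega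

lemma rowLength_add_two (r h : ℤ) :
    rowLength (r + 2) h = rowLength r h + 2 * ((r + |h|) / 2 + 1) := by
  rw [rowLength, rowLength, show (r + 2 + |h|) / 2 = (r + |h|) / 2 + 1 by omega, tri_add_one]
  ring

lemma rowLength_of_le_abs_add_one {r h : ℤ} (h₁ : |h| ≤ r) (h₂ : r ≤ |h| + 1) :
    rowLength r h = tri |h| + 1 := by
  rw [rowLength, show (r + |h|) / 2 = |h| by omega]
  ring

lemma card_Icc_neg_self (n : ℕ) : ((Finset.Icc (-(n : ℤ)) n).card : ℤ) = 2 * n + 1 := by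
  rw [Int.card_Icc_of_le _ _ (by omega)]
  ring

lemma two_mul_sum_half (r : ℕ) :
    2 * ∑ h ∈ Finset.Icc (-(r : ℤ)) r, (r + |h|) / 2 = r * (3 * r + 1) := by
  induction r using Nat.twoStepInduction with
  | zero => rfl
  | one => rfl
  | more n ih _ =>
    push_cast
    rw [Finset.sum_Icc_neg_add_two _ (fun h => by rw [abs_neg]) (by positivity),
      abs_of_nonneg (by positivity : (0 : ℤ) ≤ n + 1),
      abs_of_nonneg (by positivity : (0 : ℤ) ≤ n + 2),
      Finset.sum_congr rfl fun h _ => show ((n : ℤ) + 2 + |h|) / 2 = (n + |h|) / 2 + 1 by omega,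
      Finset.sum_add_distrib, Finset.sum_const, nsmul_eq_mul, mul_one, card_Icc_neg_self,
      show ((n : ℤ) + 2 + (n + 1)) / 2 = n + 1 by omega,
      show ((n : ℤ) + 2 + (n + 2)) / 2 = n + 2 by omega]
    linear_combination ih

lemma ballSize_add_two (r : ℕ) : ballSize (r + 2) =
    ballSize r + r * (3 * r + 1) + 2 * (2 * r + 1) + 2 * (tri (r + 1) + tri (r + 2) + 2) := by
  have h₁ : |(r + 1 : ℤ)| = r + 1 := abs_of_nonneg (by positivity)
  have h₂ : |(r + 2 : ℤ)| = r + 2 := abs_of_nonneg (by positivity)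
  rw [ballSize, ballSize, Nat.cast_add, Nat.cast_two,
    Finset.sum_Icc_neg_add_two _ (fun h => by rw [rowLength, rowLength, abs_neg]) (by positivity),
    rowLength_of_le_abs_add_one (by omega) (by omega),
    rowLength_of_le_abs_add_one (by omega) (by omega),
    Finset.sum_congr rfl fun h _ => rowLength_add_two r h, Finset.sum_add_distrib, ← Finset.mul_sum,
    Finset.sum_add_distrib, Finset.sum_const, nsmul_eq_mul, mul_one, card_Icc_neg_self, h₁, h₂,
    two_nsmul]
  linear_combination two_mul_sum_half r

lemma twelve_mul_ballSize (r : ℕ) : 12 * ballSize r =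
    10 * (r : ℤ)^3 + 9 * (r : ℤ)^2 + 23 * (r : ℤ) + 6 * (((r + 1) / 2 : ℕ) : ℤ) + 12 := by
  induction r using Nat.twoStepInduction with
  | zero => rfl
  | one => rfl
  | more n ih _ =>
    rw [ballSize_add_two, show (n + 2 + 1) / 2 = (n + 1) / 2 + 1 by omega]
    have h₁ := two_mul_tri (n + 1)
    have h₂ := two_mul_tri (n + 2)
    push_cast at ih ⊢
    linear_combination ih + 12 * h₁ + 12 * h₂

end ParabolicTaxicab

theorem ball_cardinality (r : ℕ) :
    12 * ({X : ℤ × ℤ | dpc (0, 0) X ≤ r}.ncard : ℤ) =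
      10 * (r : ℤ)^3 + 9 * (r : ℤ)^2 + 23 * (r : ℤ) + 6 * (((r + 1) / 2 : ℕ) : ℤ) + 12 := by
  rw [ParabolicTaxicab.setOf_dpc_le_eq_pcBall, ParabolicTaxicab.ncard_pcBall,
    ParabolicTaxicab.twelve_mul_ballSize]
end
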